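/- Let μ₁, μ₂ > 0 and for β > max{μ₁, μ₂} set α₁(β) = √((μ₂−β)/(μ₁μ₂−β²)), α₂(β) = √((μ₁−β)/(μ₁μ₂−β²)). Then as β → +∞: α₁(β) → 0, α₂(β) → 0, √β·α₁(β) → 1, and √β·α₂(β) → 1. Consequently, −3(μ₁α₁(β)² + μ₂α₂(β)²) − β(α₁(β)² + α₂(β)² − 4α₁(β)α₂(β)) → 2 as β → +∞. -/

import Mathlib

open Filter

private lemma key_lim (μ1 μ2 : ℝ) (hμ1 : 0 < μ1) (hμ2 : 0 < μ2) :
    Tendsto (fun β : ℝ => β * ((μ2 - β)/(μ1*μ2 - β^2))) atTop (nhds 1) := by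
  have h1 : Tendsto (fun β : ℝ => μ2 * β⁻¹ - 1) atTop (nhds (-1)) := by
    have := (tendsto_inv_atTop_zero (𝕜 := ℝ)).const_mul μ2
    simpa using this.sub_const 1
  have hp : Tendsto (fun β : ℝ => β^2) atTop atTop := tendsto_pow_atTop (by norm_num)
  have h2 : Tendsto (fun β : ℝ => μ1 * μ2 * (β^2)⁻¹ - 1) atTop (nhds (-1)) := by
    have := ((tendsto_inv_atTop_zero (𝕜 := ℝ)).comp hp).const_mul (μ1*μ2)
    simpa [Function.comp] using this.sub_const 1
  have h3 : Tendsto (fun β : ℝ => (μ2 * β⁻¹ - 1)/(μ1 * μ2 * (β^2)⁻¹ - 1)) atTop (nhds 1) := by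
    have := h1.div h2 (by norm_num)
    simpa [Pi.div_def] using this
  refine h3.congr' ?_
  filter_upwards [eventually_gt_atTop (max μ1 μ2), eventually_gt_atTop 0] with β hβ hβ0
  have hβ1 : μ1 < β := lt_of_le_of_lt (le_max_left _ _) hβ
  have hβ2 : μ2 < β := lt_of_le_of_lt (le_max_right _ _) hβ
  have hlt : μ1 * μ2 < β^2 := by nlinarith
  have hd : μ1 * μ2 - β^2 ≠ 0 := by nlinarith
  have hd2 : μ1 * μ2 * (β^2)⁻¹ - 1 ≠ 0 := by
    have h : μ1 * μ2 * (β^2)⁻¹ < 1 := by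
      rw [← div_eq_mul_inv, div_lt_one (by positivity)]; exact hlt
    exact sub_ne_zero.mpr h.ne
  field_simp

theorem stmt_5 (μ1 μ2 : ℝ) (hμ1 : 0 < μ1) (hμ2 : 0 < μ2)
    (α1 α2 : ℝ → ℝ)
    (hα1 : ∀ β : ℝ, max μ1 μ2 < β → α1 β = Real.sqrt ((μ2 - β)/(μ1*μ2 - β^2)))
    (hα2 : ∀ β : ℝ, max μ1 μ2 < β → α2 β = Real.sqrt ((μ1 - β)/(μ1*μ2 - β^2))) :
    Tendsto α1 atTop (nhds 0) ∧ Tendsto α2 atTop (nhds 0) ∧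
    Tendsto (fun β => Real.sqrt β * α1 β) atTop (nhds 1) ∧
    Tendsto (fun β => Real.sqrt β * α2 β) atTop (nhds 1) ∧
    Tendsto (fun β => -3*(μ1*(α1 β)^2 + μ2*(α2 β)^2)
      - β*((α1 β)^2 + (α2 β)^2 - 4*(α1 β)*(α2 β))) atTop (nhds 2) := by
  set f : ℝ → ℝ := fun β => (μ2 - β)/(μ1*μ2 - β^2) with hf_def
  set g : ℝ → ℝ := fun β => (μ1 - β)/(μ1*μ2 - β^2) with hg_def
  have kf : Tendsto (fun β => β * f β) atTop (nhds 1) := key_lim μ1 μ2 hμ1 hμ2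
  have kg : Tendsto (fun β => β * g β) atTop (nhds 1) := by
    have := key_lim μ2 μ1 hμ2 hμ1
    simpa [hg_def, mul_comm μ2 μ1] using this
  have hf0 : Tendsto f atTop (nhds 0) := by
    have h := (tendsto_inv_atTop_zero (𝕜 := ℝ)).mul kf
    rw [zero_mul] at h
    refine h.congr' ?_
    filter_upwards [eventually_gt_atTop 0] with β hβ0
    field_simp
  have hg0 : Tendsto g atTop (nhds 0) := by
    have h := (tendsto_inv_atTop_zero (𝕜 := ℝ)).mul kg
    rw [zero_mul] at h
    refine h.congr' ?_
    filter_upwards [eventually_gt_atTop 0] with β hβ0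
    field_simp
  -- basic eventual facts
  have hev : ∀ᶠ β : ℝ in atTop, max μ1 μ2 < β ∧ 0 < β ∧ 0 ≤ f β ∧ 0 ≤ g β := by
    filter_upwards [eventually_gt_atTop (max μ1 μ2), eventually_gt_atTop 0] with β hβ hβ0
    have hβ1 : μ1 < β := lt_of_le_of_lt (le_max_left _ _) hβ
    have hβ2 : μ2 < β := lt_of_le_of_lt (le_max_right _ _) hβ
    have hden : μ1*μ2 - β^2 ≤ 0 := by nlinarith
    exact ⟨hβ, hβ0, div_nonneg_iff.mpr (Or.inr ⟨by linarith, hden⟩),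
      div_nonneg_iff.mpr (Or.inr ⟨by linarith, hden⟩)⟩
  have ha1 : Tendsto α1 atTop (nhds 0) := by
    have h : Tendsto (fun β => Real.sqrt (f β)) atTop (nhds 0) := by
      have := (Real.continuous_sqrt.tendsto' 0 0 Real.sqrt_zero).comp hf0
      simpa [Function.comp_def] using this
    refine h.congr' ?_
    filter_upwards [hev] with β hβ
    exact (hα1 β hβ.1).symm
  have ha2 : Tendsto α2 atTop (nhds 0) := by
    have h : Tendsto (fun β => Real.sqrt (g β)) atTop (nhds 0) := by
      have := (Real.continuous_sqrt.tendsto' 0 0 Real.sqrt_zero).comp hg0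
      simpa [Function.comp_def] using this
    refine h.congr' ?_
    filter_upwards [hev] with β hβ
    exact (hα2 β hβ.1).symm
  have hs1 : Tendsto (fun β => Real.sqrt β * α1 β) atTop (nhds 1) := by
    have h : Tendsto (fun β => Real.sqrt (β * f β)) atTop (nhds 1) := by
      have := (Real.continuous_sqrt.tendsto' 1 1 (by simp)).comp kf
      simpa [Function.comp_def] using this
    refine h.congr' ?_
    filter_upwards [hev] with β hβ
    rw [hα1 β hβ.1, Real.sqrt_mul hβ.2.1.le]
  have hs2 : Tendsto (fun β => Real.sqrt β * α2 β) atTop (nhds 1) := by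
    have h : Tendsto (fun β => Real.sqrt (β * g β)) atTop (nhds 1) := by
      have := (Real.continuous_sqrt.tendsto' 1 1 (by simp)).comp kg
      simpa [Function.comp_def] using this
    refine h.congr' ?_
    filter_upwards [hev] with β hβ
    rw [hα2 β hβ.1, Real.sqrt_mul hβ.2.1.le]
  refine ⟨ha1, ha2, hs1, hs2, ?_⟩
  have hbig : Tendsto (fun β => -3*(μ1 * f β + μ2 * g β)
      - ((β * f β) + (β * g β) - 4*((Real.sqrt β * α1 β)*(Real.sqrt β * α2 β))))
      atTop (nhds 2) := by
    have h1 := ((hf0.const_mul μ1).add (hg0.const_mul μ2)).const_mul (-3)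
    have h2 := (kf.add kg).sub ((hs1.mul hs2).const_mul 4)
    have := h1.sub h2
    norm_num at this
    convert this using 2 <;> norm_num
  refine hbig.congr' ?_
  filter_upwards [hev] with β hβ
  obtain ⟨hβm, hβ0, hf, hg⟩ := hβ
  rw [hα1 β hβm, hα2 β hβm, Real.sq_sqrt hf, Real.sq_sqrt hg]
  have hb : Real.sqrt β * Real.sqrt β = β := Real.mul_self_sqrt hβ0.le
  linear_combination (4 * Real.sqrt (f β) * Real.sqrt (g β)) * hb
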